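/- Let δ > 0 and let f : ℝ → ℝ be a 2π-periodic function admitting an extension F that is continuous on the closed strip {z ∈ ℂ : |Im z| ≤ δ}, holomorphic in its interior, 2π-periodic (F(z + 2π) = F(z)), and bounded with M = sup_{|Im z|≤δ} |F(z)|. Then the Fourier coefficients of f satisfy |f̃_n| ≤ M·e^{−δ|n|} for every n ∈ ℤ. -/

import Mathlib

/-!
By Cauchy–Goursat on the rectangle `[0, 2π] × [0, y]`, whose vertical sides cancel by periodicity,
the Fourier integral of `F(z) e^{-inz}` over `[0, 2π]` equals the one over `[0, 2π] + iy`. Taking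
`y = -δ sign n` puts the contour on the edge of the strip where `|e^{-inz}| = e^{-δ|n|}`, and
there `|F| ≤ M`.
-/

open Real

noncomputable def fourierCoef (f : ℝ → ℝ) (n : ℤ) : ℂ :=
  (1 / (2 * Real.pi)) * ∫ x in (0:ℝ)..(2 * Real.pi), (f x : ℂ) * Complex.exp (-(Complex.I * n * x))

open Complex Set
open scoped Interval

section ContourShift

variable {E : Type*} [NormedAddCommGroup E] [NormedSpace ℂ E]

theorem intervalIntegral_eq_intervalIntegral_add_mul_I_of_periodic (g : ℂ → E) (T y : ℝ)
    (hcont : ContinuousOn g ([[0, T]] ×ℂ [[0, y]]))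
    (hdiff : DifferentiableOn ℂ g (Ioo (min 0 T) (max 0 T) ×ℂ Ioo (min 0 y) (max 0 y)))
    (hper : ∀ t ∈ [[0, y]], g (t * I + T) = g (t * I)) :
    ∫ x : ℝ in 0..T, g x = ∫ x : ℝ in 0..T, g (x + y * I) := by
  have hcauchy := integral_boundary_rect_eq_zero_of_continuousOn_of_differentiableOn g 0 (T + y * I)
    (by simpa using hcont) (by simpa using hdiff)
  have hvert : ∫ t : ℝ in 0..y, g (T + t * I) = ∫ t : ℝ in 0..y, g (t * I) :=
    intervalIntegral.integral_congr fun t ht => by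
      rw [add_comm, hper t ht]
  simp only [zero_re, zero_im, add_re, ofReal_re, mul_re, I_re, I_im, add_im, ofReal_im, mul_im,
    mul_zero, zero_mul, mul_one, sub_zero, zero_add, add_zero, ofReal_zero] at hcauchy
  rwa [hvert, add_sub_cancel_right, sub_eq_zero] at hcauchy

end ContourShift

theorem abs_le_of_mem_uIcc_zero {y t : ℝ} (ht : t ∈ [[0, y]]) : |t| ≤ |y| := by
  simpa using abs_sub_left_of_mem_uIcc ht

theorem abs_lt_of_mem_Ioo_min_max_zero {y t : ℝ} (ht : t ∈ Ioo (min 0 y) (max 0 y)) :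
    |t| < |y| := by
  rcases le_total 0 y with hy | hy
  · rw [min_eq_left hy, max_eq_right hy] at ht
    rw [abs_of_pos ht.1, abs_of_nonneg hy]; exact ht.2
  · rw [min_eq_right hy, max_eq_left hy] at ht
    rw [abs_of_neg ht.2, abs_of_nonpos hy]; linarith [ht.1]

theorem reProdIm_uIcc_subset_strip {a b y δ : ℝ} (hy : |y| ≤ δ) :
    [[a, b]] ×ℂ [[0, y]] ⊆ {z : ℂ | |z.im| ≤ δ} :=
  fun _ hz => (abs_le_of_mem_uIcc_zero hz.2).trans hy

theorem reProdIm_Ioo_subset_strip {a b y δ : ℝ} (hy : |y| ≤ δ) :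
    Ioo a b ×ℂ Ioo (min 0 y) (max 0 y) ⊆ {z : ℂ | |z.im| < δ} :=
  fun _ hz => (abs_lt_of_mem_Ioo_min_max_zero hz.2).trans_le hy

theorem exp_neg_I_int_mul_add_two_pi (n : ℤ) (z : ℂ) :
    exp (-(I * n * (z + 2 * π))) = exp (-(I * n * z)) := by
  rw [show -(I * n * (z + 2 * π)) = -(I * n * z) + (-n : ℤ) * (2 * π * I) by push_cast; ring,
    Complex.exp_add, exp_int_mul_two_pi_mul_I, mul_one]

theorem norm_exp_neg_I_mul_add_mul_I (n : ℤ) (x y : ℝ) :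
    ‖exp (-(I * n * (x + y * I)))‖ = Real.exp (n * y) := by
  rw [norm_exp]; congr 1; simp [mul_re, mul_im]

theorem abs_int_sign_le_one (n : ℤ) : |(n.sign : ℝ)| ≤ 1 := by
  rcases n.sign_trichotomy with h | h | h <;> simp [h]

theorem intCast_mul_mul_sign (c : ℝ) (n : ℤ) : (n : ℝ) * (c * n.sign) = c * |(n : ℝ)| := by
  have : (n.sign : ℝ) * n = |(n : ℝ)| := by exact_mod_cast Int.sign_mul_self_eq_abs n
  linear_combination c * this

theorem fourierCoef_exp_decay_of_strip_extension_general
    (δ : ℝ) (hδ : 0 < δ) (f : ℝ → ℝ)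
    (F : ℂ → ℂ) (hext : ∀ x : ℝ, F x = f x)
    (hcont : ContinuousOn F {z : ℂ | |z.im| ≤ δ})
    (hol : DifferentiableOn ℂ F {z : ℂ | |z.im| < δ})
    (hFper : ∀ z : ℂ, |z.im| ≤ δ → F (z + 2 * Real.pi) = F z)
    (M : ℝ) (hM : ∀ z : ℂ, |z.im| ≤ δ → ‖F z‖ ≤ M) :
    ∀ n : ℤ, ‖fourierCoef f n‖ ≤ M * Real.exp (-δ * |n|) := by
  intro n
  set y : ℝ := -δ * n.sign
  have hy : |y| ≤ δ := by
    rw [abs_mul, abs_neg, abs_of_pos hδ]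
    exact mul_le_of_le_one_right hδ.le (abs_int_sign_le_one n)
  set g : ℂ → ℂ := fun z => F z * exp (-(I * n * z))
  have hshift : ∫ x : ℝ in 0..2 * π, g x = ∫ x : ℝ in 0..2 * π, g (x + y * I) := by
    refine intervalIntegral_eq_intervalIntegral_add_mul_I_of_periodic g _ _
      ((hcont.mul (by fun_prop)).mono (reProdIm_uIcc_subset_strip hy))
      ((hol.mul (by fun_prop)).mono (reProdIm_Ioo_subset_strip hy)) fun t ht => ?_
    have ht' : |(t * I).im| ≤ δ := by simpa using (abs_le_of_mem_uIcc_zero ht).trans hy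
    push_cast
    simp only [g, hFper _ ht', exp_neg_I_int_mul_add_two_pi]
  have hbound : ∀ x : ℝ, ‖g (x + y * I)‖ ≤ M * Real.exp (-δ * |(n : ℝ)|) := fun x => by
    rw [norm_mul, norm_exp_neg_I_mul_add_mul_I, intCast_mul_mul_sign]
    gcongr
    exact hM _ (by simpa using hy)
  have hcoef : fourierCoef f n = 1 / (2 * π) * ∫ x : ℝ in 0..2 * π, g x := by
    simp only [fourierCoef, g, hext]
  calc ‖fourierCoef f n‖ = (2 * π)⁻¹ * ‖∫ x : ℝ in 0..2 * π, g (x + y * I)‖ := by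
        rw [hcoef, hshift, norm_mul]
        simp [pi_pos.le]
    _ ≤ (2 * π)⁻¹ * (M * Real.exp (-δ * |(n : ℝ)|) * |2 * π - 0|) := by
        gcongr
        exact intervalIntegral.norm_integral_le_of_norm_le_const fun x _ => hbound x
    _ = M * Real.exp (-δ * |n|) := by
        rw [sub_zero, abs_of_pos two_pi_pos, Int.cast_abs]; field_simp

/-- Exponential decay of Fourier coefficients of a function with a bounded holomorphic
extension to the closed strip `|Im z| ≤ δ`: `|f̃_n| ≤ M e^{-δ|n|}`. -/
theorem fourierCoef_exp_decay_of_strip_extension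
    (δ : ℝ) (hδ : 0 < δ) (f : ℝ → ℝ) (hper : Function.Periodic f (2 * Real.pi))
    (F : ℂ → ℂ) (hext : ∀ x : ℝ, F x = f x)
    (hcont : ContinuousOn F {z : ℂ | |z.im| ≤ δ})
    (hol : DifferentiableOn ℂ F {z : ℂ | |z.im| < δ})
    (hFper : ∀ z : ℂ, |z.im| ≤ δ → F (z + 2 * Real.pi) = F z)
    (M : ℝ) (hM : ∀ z : ℂ, |z.im| ≤ δ → ‖F z‖ ≤ M) :
    ∀ n : ℤ, ‖fourierCoef f n‖ ≤ M * Real.exp (-δ * |n|) :=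
  fourierCoef_exp_decay_of_strip_extension_general δ hδ f F hext hcont hol hFper M hM
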